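/- arXiv:2201.05838 — 2 statements merged into one kernel-verified Lean document; each statement's English description precedes it below -/
import Mathlib

section
/- If A is a real r×r matrix with ‖A‖² ≤ ρ² (operator norm squared bounded by ρ²), Q_w and P symmetric positive semidefinite, then Tr(f^q(P)) ≤ ρ^{2q} Tr(P) + Tr(Q_w) · Σ_{i=0}^{q-1} ρ^{2i} for all q ≥ 1, where f(X) = A X Aᵀ + Q_w. -/
open Matrix

/-
Since `X ↦ A X Aᵀ` preserves positive semidefiniteness, every iterate `f^[n] P` is PSD.
Writing a PSD `X` as `Bᵀ B`, the trace `Tr (A X Aᵀ)` is the sum of the squared Euclidean norms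
of the vectors `A bⱼ` over the columns `bⱼ` of `Bᵀ`, hence at most `‖A‖² Tr X`. So
`t n := Tr (f^[n] P)` satisfies `t (n + 1) ≤ ρ² t n + Tr Q_w`, and unrolling this linear
recursion gives the bound.
-/

theorem le_pow_mul_add_mul_geom_sum {t : ℕ → ℝ} {a b : ℝ} (ha : 0 ≤ a)
    (h : ∀ n, t (n + 1) ≤ a * t n + b) (n : ℕ) :
    t n ≤ a ^ n * t 0 + b * ∑ i ∈ Finset.range n, a ^ i := by
  induction n with
  | zero => simp
  | succ n ih =>
    calc t (n + 1) ≤ a * t n + b := h n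
      _ ≤ a * (a ^ n * t 0 + b * ∑ i ∈ Finset.range n, a ^ i) + b := by gcongr
      _ = a ^ (n + 1) * t 0 + b * ∑ i ∈ Finset.range (n + 1), a ^ i := by
        rw [geom_sum_succ]
        ring

namespace Matrix

variable {m n k : Type*} [Fintype m] [Fintype n] [Fintype k]

theorem trace_mul_transpose_self (M : Matrix m n ℝ) :
    (M * Mᵀ).trace = ∑ i, ∑ j, M i j ^ 2 := by
  simp [trace, mul_apply, sq]

variable [DecidableEq n]

open scoped Matrix.Norms.L2Operator

theorem sum_sq_mul_le (A : Matrix m n ℝ) (M : Matrix n k ℝ) :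
    ∑ i, ∑ j, (A * M) i j ^ 2 ≤ ‖A‖ ^ 2 * ∑ i, ∑ j, M i j ^ 2 := by
  rw [Finset.sum_comm, Finset.sum_comm (f := fun i j => M i j ^ 2), Finset.mul_sum]
  refine Finset.sum_le_sum fun j _ => ?_
  have hcol := pow_le_pow_left₀ (norm_nonneg _)
    (A.l2_opNorm_mulVec (WithLp.toLp 2 fun i => M i j)) 2
  rw [mul_pow, EuclideanSpace.real_norm_sq_eq, EuclideanSpace.real_norm_sq_eq] at hcol
  simpa [mulVec, dotProduct, mul_apply] using hcol

open scoped MatrixOrder in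
theorem trace_mul_mul_transpose_le (A : Matrix m n ℝ) {X : Matrix n n ℝ} (hX : X.PosSemidef) :
    (A * X * Aᵀ).trace ≤ ‖A‖ ^ 2 * X.trace := by
  obtain ⟨B, rfl⟩ := CStarAlgebra.nonneg_iff_eq_star_mul_self.mp hX.nonneg
  have hB : star B = Bᵀ := conjTranspose_eq_transpose_of_trivial B
  have hsum := sum_sq_mul_le A Bᵀ
  rw [← trace_mul_transpose_self, ← trace_mul_transpose_self] at hsum
  simpa only [hB, transpose_mul, transpose_transpose, Matrix.mul_assoc] using hsum

end Matrix

/-- If the (ℓ²) operator norm of A satisfies ‖A‖² ≤ ρ², Q_w and P are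
symmetric PSD, then Tr(f^q(P)) ≤ ρ^{2q} Tr(P) + Tr(Q_w) · Σ_{i=0}^{q-1} ρ^{2i}
for all q ≥ 1, where f(X) = A X Aᵀ + Q_w. -/
theorem stmt_5 {r : ℕ} (A Qw P : Matrix (Fin r) (Fin r) ℝ) (ρ : ℝ)
    (hA : ‖Matrix.toEuclideanCLM (𝕜 := ℝ) A‖ ^ 2 ≤ ρ ^ 2)
    (hQ : Qw.PosSemidef) (hP : P.PosSemidef)
    (f : Matrix (Fin r) (Fin r) ℝ → Matrix (Fin r) (Fin r) ℝ)
    (hf : ∀ X, f X = A * X * Aᵀ + Qw) :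
    ∀ q : ℕ, 1 ≤ q →
      (f^[q] P).trace ≤ ρ ^ (2 * q) * P.trace
        + Qw.trace * ∑ i ∈ Finset.range q, ρ ^ (2 * i) := by
  intro q _
  have hpsd : ∀ n, (f^[n] P).PosSemidef := Function.Iterate.rec _ hP fun X hX => by
    simpa only [hf, conjTranspose_eq_transpose_of_trivial] using
      (hX.mul_mul_conjTranspose_same A).add hQ
  have hstep : ∀ n, (f^[n + 1] P).trace ≤ ρ ^ 2 * (f^[n] P).trace + Qw.trace := fun n => by
    rw [Function.iterate_succ_apply', hf, trace_add]
    gcongr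
    calc (A * f^[n] P * Aᵀ).trace
        ≤ ‖Matrix.toEuclideanCLM (𝕜 := ℝ) A‖ ^ 2 * (f^[n] P).trace :=
          trace_mul_mul_transpose_le A (hpsd n)
      _ ≤ ρ ^ 2 * (f^[n] P).trace := by gcongr; exact (hpsd n).trace_nonneg
  simpa only [pow_mul, Function.iterate_zero_apply] using
    le_pow_mul_add_mul_geom_sum (t := fun n => (f^[n] P).trace) (sq_nonneg ρ) hstep q
end

section
/- Suppose packet failures are i.i.d. Bernoulli with failure probability ε, the age of information satisfies q_k = 1 on success and q_k = q_{k-1} + 1 on failure, and the one-step MSE cost is bounded by c(q) ≤ C ρ^{2q} with ρ ≥ 1. If ε ρ² < 1, then the expected cost in each time slot is bounded: E[c(q_k)] ≤ C ρ² / (1 − ε ρ²) for all k, given q_0 = 1. -/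
/-!
Writing `x = ε ρ²`, the weight of `q_k = j` times `ρ^(2j)` is `ρ² (1 - ε) x^(j-1) ≤ ρ² x^(j-1)`,
and the no-success term is `ρ² x^k`; so the expected cost is at most `C ρ²` times a partial
geometric series in `x < 1`.
-/

open Finset

/-- `E[f(q_k)]` for the age of information started at `q_0 = 1` with failure probability `ε`:
`q_k = j` with probability `(1 - ε) ε^(j-1)` for `1 ≤ j ≤ k` (last success at slot `k - j + 1`),
and `q_k = k + 1` with probability `ε^k` (no success yet). -/
def aoiMean (ε : ℝ) (f : ℕ → ℝ) (k : ℕ) : ℝ :=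
  (∑ j ∈ Icc 1 k, (1 - ε) * ε ^ (j - 1) * f j) + ε ^ k * f (k + 1)

section aoiMean

variable {ε : ℝ} {f g : ℕ → ℝ}

theorem aoiMean_mono (hε0 : 0 ≤ ε) (hε1 : ε ≤ 1) (hfg : ∀ q, f q ≤ g q) (k : ℕ) :
    aoiMean ε f k ≤ aoiMean ε g k := by
  have hw : 0 ≤ 1 - ε := sub_nonneg.2 hε1
  unfold aoiMean
  gcongr with j
  · exact hfg j
  · exact hfg (k + 1)

theorem aoiMean_const_mul (C : ℝ) (k : ℕ) :
    aoiMean ε (fun q ↦ C * f q) k = C * aoiMean ε f k := by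
  simp only [aoiMean, mul_add, mul_sum]
  congr 1
  · exact sum_congr rfl fun _ _ ↦ by ring
  · ring

theorem aoiMean_eq_sum_range (k : ℕ) :
    aoiMean ε f k = (∑ i ∈ range k, (1 - ε) * ε ^ i * f (i + 1)) + ε ^ k * f (k + 1) := by
  simp only [aoiMean, ← Ico_add_one_right_eq_Icc, sum_Ico_eq_sum_range, Nat.add_sub_cancel,
    add_comm 1]

theorem aoiMean_pow_le {r : ℝ} (hε0 : 0 ≤ ε) (hr : 0 ≤ r) (hstab : ε * r < 1) (k : ℕ) :
    aoiMean ε (r ^ ·) k ≤ r / (1 - ε * r) := by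
  have hx : 0 ≤ ε * r := mul_nonneg hε0 hr
  have hterm (i : ℕ) : ε ^ i * r ^ (i + 1) = r * (ε * r) ^ i := by ring
  rw [aoiMean_eq_sum_range]
  calc (∑ i ∈ range k, (1 - ε) * ε ^ i * r ^ (i + 1)) + ε ^ k * r ^ (k + 1)
      ≤ (∑ i ∈ range k, r * (ε * r) ^ i) + r * (ε * r) ^ k := by
        refine add_le_add (sum_le_sum fun i _ ↦ ?_) (hterm k).le
        rw [mul_assoc, hterm]
        nlinarith [mul_nonneg hr (pow_nonneg hx i)]
    _ = r * ∑ i ∈ range (k + 1), (ε * r) ^ i := by rw [sum_range_succ, mul_add, mul_sum]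
    _ ≤ r * (1 / (1 - ε * r)) := by
        refine mul_le_mul_of_nonneg_left ?_ hr
        have := geom_sum_Ico_le_of_lt_one (m := 0) (n := k + 1) hx hstab
        rwa [pow_zero, ← range_eq_Ico] at this
    _ = r / (1 - ε * r) := mul_one_div r _

end aoiMean

theorem stmt_7_general (ε ρ C : ℝ) (c : ℕ → ℝ)
    (hε0 : 0 ≤ ε) (hε1 : ε < 1) (hC : 0 < C)
    (hstab : ε * ρ ^ 2 < 1)
    (hc : ∀ q : ℕ, c q ≤ C * ρ ^ (2 * q)) :
    ∀ k : ℕ,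
      (∑ j ∈ Finset.Icc 1 k, (1 - ε) * ε ^ (j - 1) * c j) + ε ^ k * c (k + 1)
        ≤ C * ρ ^ 2 / (1 - ε * ρ ^ 2) := by
  intro k
  have hc' (q : ℕ) : c q ≤ C * (ρ ^ 2) ^ q := by rw [← pow_mul]; exact hc q
  calc aoiMean ε c k
      ≤ aoiMean ε (fun q ↦ C * (ρ ^ 2) ^ q) k := aoiMean_mono hε0 hε1.le hc' k
    _ = C * aoiMean ε (fun q ↦ (ρ ^ 2) ^ q) k := aoiMean_const_mul C k
    _ ≤ C * (ρ ^ 2 / (1 - ε * ρ ^ 2)) := by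
        gcongr
        exact aoiMean_pow_le hε0 (sq_nonneg ρ) hstab k
    _ = C * ρ ^ 2 / (1 - ε * ρ ^ 2) := (mul_div_assoc _ _ _).symm

/-- With i.i.d. Bernoulli(ε) packet failures, AoI recursion q_k = 1 on
success and q_k = q_{k-1}+1 on failure with q_0 = 1, the AoI at slot k has distribution
P(q_k = j) = (1−ε)ε^{j−1} for 1 ≤ j ≤ k and P(q_k = k+1) = ε^k.  If the one-step cost
satisfies c(q) ≤ C ρ^{2q} with C > 0, ρ ≥ 1, and ε ρ² < 1, then the expected cost in
each slot is bounded: E[c(q_k)] ≤ C ρ² / (1 − ε ρ²). -/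
theorem stmt_7 (ε ρ C : ℝ) (c : ℕ → ℝ)
    (hε0 : 0 ≤ ε) (hε1 : ε < 1) (hρ : 1 ≤ ρ) (hC : 0 < C)
    (hstab : ε * ρ ^ 2 < 1)
    (hc : ∀ q : ℕ, c q ≤ C * ρ ^ (2 * q)) :
    ∀ k : ℕ,
      (∑ j ∈ Finset.Icc 1 k, (1 - ε) * ε ^ (j - 1) * c j) + ε ^ k * c (k + 1)
        ≤ C * ρ ^ 2 / (1 - ε * ρ ^ 2) :=
  stmt_7_general ε ρ C c hε0 hε1 hC hstab hc
end
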